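/- Let μ ≥ 0 be real, let G_c(μ) be the unique real root x > 1 of −3x³ + 4x² − μx + 2μ = 0, and set g_c(μ) = (G_c(μ) − 1)/(G_c(μ)²·(G_c(μ)² + μ)). Then for every real g ≥ 0, the series n ↦ α_n(μ)·g^n is summable if and only if g ≤ g_c(μ). -/

import Mathlib

/-!
By Lagrange inversion, `α_n(μ)` is the `n`-th coefficient of the power series `F` solving
`F = 1 + X (F⁴ + μ F²)`, so `Y = F(gX)` has nonnegative coefficients `α_n(μ) gⁿ` and satisfies
`Y = 1 + gX (Y⁴ + μ Y²)`. If `∑ α_n(μ) gⁿ` converges, the Cauchy product shows that its sum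
`S ≥ 1` solves `S = 1 + g (S⁴ + μ S²)`, i.e. `g = (S - 1) / (S² (S² + μ))`; over `S > 0` this
function is maximal at its critical point `G_c`, where it equals `g_c`. Conversely, for `g ≤ g_c`
the partial sums obey `s_{N+1} ≤ 1 + g (s_N⁴ + μ s_N²)`, so by induction they stay below `G_c`.
-/

/-- `α_n(μ) = ∑_{q=0}^{n} μ^q/(3n − 2q + 1) · C(n,q) · C(4n − 2q, n)`, the
coefficient of `g^n` in the leading-order two-point function `G_LO(g, μ)`. -/
noncomputable def alphaCoeff (μ : ℝ) (n : ℕ) : ℝ :=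
  ∑ q ∈ Finset.range (n + 1),
    μ ^ q / (3 * (n : ℝ) - 2 * (q : ℝ) + 1) * (Nat.choose n q : ℝ) *
      (Nat.choose (4 * n - 2 * q) n : ℝ)

open PowerSeries Finset

theorem Finset.sum_range_sum_antidiagonal_le_mul {R : Type*} [CommSemiring R] [PartialOrder R]
    [IsOrderedRing R] {a b : ℕ → R} (ha : ∀ n, 0 ≤ a n) (hb : ∀ n, 0 ≤ b n) (N : ℕ) :
    ∑ n ∈ range N, ∑ p ∈ antidiagonal n, a p.1 * b p.2
      ≤ (∑ n ∈ range N, a n) * ∑ n ∈ range N, b n := by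
  rw [sum_mul_sum, ← sum_product', sum_sigma']
  calc _ = ∑ p ∈ ((range N).sigma antidiagonal).image Sigma.snd, a p.1 * b p.2 := by
        rw [sum_image]
        rintro ⟨n, p⟩ hp ⟨m, q⟩ hq (rfl : p = q)
        simp only [coe_sigma, Set.mem_sigma_iff, mem_coe, HasAntidiagonal.mem_antidiagonal] at hp hq
        rw [← hp.2, hq.2]
    _ ≤ _ := by
        refine sum_le_sum_of_subset_of_nonneg ?_ fun p _ _ => mul_nonneg (ha p.1) (hb p.2)
        intro _ hp
        obtain ⟨⟨n, p⟩, hnp, rfl⟩ := mem_image.mp hp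
        simp only [mem_sigma, mem_range, HasAntidiagonal.mem_antidiagonal] at hnp
        simp only [mem_product, mem_range]
        omega

theorem sub_one_div_le_of_cubic_root {μ Gc S : ℝ} (hμ : 0 ≤ μ) (hGc1 : 1 < Gc)
    (hGcRoot : -3 * Gc ^ 3 + 4 * Gc ^ 2 - μ * Gc + 2 * μ = 0) (hS : 0 < S) :
    (S - 1) / (S ^ 2 * (S ^ 2 + μ)) ≤ (Gc - 1) / (Gc ^ 2 * (Gc ^ 2 + μ)) := by
  rw [div_le_div_iff₀ (by positivity) (by positivity)]
  -- the cubic is the numerator of the derivative of `s ↦ (s - 1) / (s² (s² + μ))`,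
  -- so the difference has a double zero at `S = Gc`
  have key : (Gc - 1) * (S ^ 2 * (S ^ 2 + μ)) - (S - 1) * (Gc ^ 2 * (Gc ^ 2 + μ))
      = (S - Gc) ^ 2 * (Gc - 1) * ((S + Gc) ^ 2 + 2 * Gc ^ 2 + μ) := by
    linear_combination (Gc ^ 2 - S * Gc) * hGcRoot
  have : 0 ≤ (S - Gc) ^ 2 * (Gc - 1) * ((S + Gc) ^ 2 + 2 * Gc ^ 2 + μ) :=
    mul_nonneg (mul_nonneg (sq_nonneg _) (sub_nonneg.mpr hGc1.le)) (by positivity)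
  linarith

namespace PowerSeries

section FixedPoint

variable {R : Type*} [CommRing R]

theorem eq_zero_of_forall_X_pow_dvd {A : R⟦X⟧} (h : ∀ n, X ^ n ∣ A) : A = 0 := by
  ext n
  exact X_pow_dvd_iff.mp (h (n + 1)) n n.lt_succ_self

theorem exists_fixedPoint_of_X_pow_dvd (T : R⟦X⟧ → R⟦X⟧)
    (hT : ∀ n A B, X ^ n ∣ A - B → X ^ (n + 1) ∣ T A - T B) : ∃ F, T F = F := by
  have step : ∀ k, X ^ k ∣ T (T^[k] 0) - T^[k] 0 := by
    intro k
    induction k with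
    | zero => simp
    | succ k ih =>
      rw [Function.iterate_succ_apply']
      exact hT k _ _ ih
  have stable : ∀ k j, k ≤ j → X ^ k ∣ T^[j] 0 - T^[k] 0 := by
    intro k j hkj
    induction j, hkj using Nat.le_induction with
    | base => simp
    | succ j hkj ih =>
      rw [Function.iterate_succ_apply', ← sub_add_sub_cancel _ (T^[j] 0)]
      exact dvd_add ((pow_dvd_pow X hkj).trans (step j)) ih
  -- the `n`-th coefficient of the iterates `T^[k] 0` is constant for `k > n`
  let F : R⟦X⟧ := mk fun n => coeff n (T^[n + 1] 0)
  have approx : ∀ n, X ^ n ∣ F - T^[n] 0 := by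
    intro n
    refine X_pow_dvd_iff.mpr fun m hm => ?_
    have := X_pow_dvd_iff.mp (stable (m + 1) n hm) m m.lt_succ_self
    rw [map_sub] at this ⊢
    simp only [F, coeff_mk]
    linear_combination -this
  refine ⟨F, sub_eq_zero.mp (eq_zero_of_forall_X_pow_dvd fun n => ?_)⟩
  have h1 : X ^ n ∣ T F - T^[n + 1] 0 := by
    rw [Function.iterate_succ_apply']
    exact (pow_dvd_pow X n.le_succ).trans (hT n _ _ (approx n))
  rw [← sub_sub_sub_cancel_right _ _ (T^[n + 1] 0)]
  exact dvd_sub h1 ((pow_dvd_pow X n.le_succ).trans (approx (n + 1)))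

theorem exists_eq_aeval_X_mul (p : Polynomial R) :
    ∃ V : R⟦X⟧, V = Polynomial.aeval (X * V) p := by
  obtain ⟨V, hV⟩ := exists_fixedPoint_of_X_pow_dvd (fun V => Polynomial.aeval (X * V) p)
    fun n A B hAB => by
      have hX : (X : R⟦X⟧) ^ (n + 1) ∣ X * A - X * B := by
        rw [pow_succ', ← mul_sub]
        exact mul_dvd_mul_left X hAB
      simpa only [← Polynomial.eval_map_algebraMap] using
        hX.trans (Polynomial.sub_dvd_eval_sub _ _ (p.map (algebraMap R R⟦X⟧)))
  exact ⟨V, hV.symm⟩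

end FixedPoint

section LagrangeInversion

variable {K : Type*} [Field K] [CharZero K] {V : K⟦X⟧}

theorem coeff_inv_pow_succ_mul_derivative_X_mul (hV : constantCoeff V ≠ 0) (j : ℕ) :
    coeff j (V⁻¹ ^ (j + 1) * d⁄dX K (X * V)) = if j = 0 then 1 else 0 := by
  have split : V⁻¹ ^ (j + 1) * d⁄dX K (X * V)
      = V⁻¹ ^ j + X * (V⁻¹ ^ (j + 1) * d⁄dX K V) := by
    rw [Derivation.leibniz, derivative_X, smul_eq_mul, smul_eq_mul]
    linear_combination V⁻¹ ^ j * PowerSeries.inv_mul_cancel V hV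
  rcases j with _ | i
  · simp [hV]
  · -- the two terms cancel since `d⁄dX (V⁻¹ ^ (i + 1)) = -(i + 1) V⁻¹ ^ (i + 2) d⁄dX V`
    have hderiv := coeff_derivative (V⁻¹ ^ (i + 1)) i
    rw [derivative_pow, derivative_inv'] at hderiv
    have key : coeff i (V⁻¹ ^ (i + 1 + 1) * d⁄dX K V) = -coeff (i + 1) (V⁻¹ ^ (i + 1)) := by
      have e : ↑(i + 1) * V⁻¹ ^ (i + 1 - 1) * (-V⁻¹ ^ 2 * d⁄dX K V)
          = -(C ((i : K) + 1) * (V⁻¹ ^ (i + 1 + 1) * d⁄dX K V)) := by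
        rw [show ((↑(i + 1) : K⟦X⟧)) = C ((i : K) + 1) by simp, Nat.add_sub_cancel]
        ring
      rw [e, map_neg, coeff_C_mul] at hderiv
      apply mul_left_cancel₀ (Nat.cast_add_one_ne_zero (R := K) i)
      linear_combination -hderiv
    rw [split, map_add, coeff_succ_X_mul, key]
    simp

theorem coeff_X_mul_pow_mul_inv_pow_mul_derivative (hV : constantCoeff V ≠ 0) (N k : ℕ) :
    coeff N ((X * V) ^ k * (V⁻¹ ^ (N + 1) * d⁄dX K (X * V))) = if k = N then 1 else 0 := by
  have hpow (m : ℕ) : V ^ m * V⁻¹ ^ m = 1 := by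
    rw [← mul_pow, PowerSeries.mul_inv_cancel V hV, one_pow]
  rcases le_or_gt k N with hkN | hNk
  · obtain ⟨j, rfl⟩ := Nat.exists_eq_add_of_le hkN
    have e : (X * V) ^ k * (V⁻¹ ^ (k + j + 1) * d⁄dX K (X * V))
        = X ^ k * (V⁻¹ ^ (j + 1) * d⁄dX K (X * V)) := by
      linear_combination (X ^ k * V⁻¹ ^ (j + 1) * d⁄dX K (X * V)) * hpow k
    rw [e, add_comm k j, coeff_X_pow_mul, coeff_inv_pow_succ_mul_derivative_X_mul hV]
    simp
  · obtain ⟨i, rfl⟩ := Nat.exists_eq_add_of_lt hNk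
    have e : (X * V) ^ (N + i + 1) * (V⁻¹ ^ (N + 1) * d⁄dX K (X * V))
        = X ^ (N + i + 1) * (V ^ i * d⁄dX K (X * V)) := by
      linear_combination (X ^ (N + i + 1) * V ^ i * d⁄dX K (X * V)) * hpow (N + 1)
    rw [e, coeff_X_pow_mul', if_neg (by omega), if_neg (by omega)]

theorem succ_mul_coeff_eq_coeff_pow_of_eq_aeval {p : Polynomial K}
    (hVp : V = Polynomial.aeval (X * V) p) (hV : constantCoeff V ≠ 0) (N : ℕ) :
    (N + 1) * coeff N V = (p ^ (N + 1)).coeff N := by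
  have hE : d⁄dX K (X * V) = V ^ (N + 1) * (V⁻¹ ^ (N + 1) * d⁄dX K (X * V)) := by
    rw [← mul_assoc, ← mul_pow, PowerSeries.mul_inv_cancel V hV, one_pow, one_mul]
  have hVpow : V ^ (N + 1) = Polynomial.aeval (X * V) (p ^ (N + 1)) := by
    rw [map_pow, ← hVp]
  have hlt : (p ^ (N + 1)).natDegree < (p ^ (N + 1)).natDegree + N + 1 := by omega
  rw [← coeff_succ_X_mul, mul_comm, ← coeff_derivative, hE, hVpow,
    Polynomial.aeval_eq_sum_range' hlt, sum_mul, map_sum]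
  simp_rw [smul_mul_assoc, map_smul, coeff_X_mul_pow_mul_inv_pow_mul_derivative hV]
  simp

end LagrangeInversion

section Summation

variable {R : Type*} [CommSemiring R] [PartialOrder R] [IsOrderedRing R] {A B : R⟦X⟧}

theorem coeff_mul_nonneg (hA : ∀ n, 0 ≤ coeff n A) (hB : ∀ n, 0 ≤ coeff n B) (n : ℕ) :
    0 ≤ coeff n (A * B) := by
  rw [coeff_mul]
  exact sum_nonneg fun p _ => mul_nonneg (hA p.1) (hB p.2)

theorem sum_range_coeff_mul_le (hA : ∀ n, 0 ≤ coeff n A) (hB : ∀ n, 0 ≤ coeff n B) (N : ℕ) :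
    ∑ n ∈ range N, coeff n (A * B) ≤ (∑ n ∈ range N, coeff n A) * ∑ n ∈ range N, coeff n B := by
  simpa only [coeff_mul] using sum_range_sum_antidiagonal_le_mul hA hB N

end Summation

theorem sum_range_succ_coeff_one_add_X_mul {R : Type*} [CommRing R] (B : R⟦X⟧) (N : ℕ) :
    ∑ n ∈ range (N + 1), coeff n (1 + X * B) = 1 + ∑ n ∈ range N, coeff n B := by
  simp [sum_range_succ', coeff_one, add_comm]

theorem hasSum_coeff_one_add_X_mul {R : Type*} [CommRing R] [TopologicalSpace R]
    [IsTopologicalAddGroup R] {B : R⟦X⟧} {b : R} (hB : HasSum (fun n => coeff n B) b) :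
    HasSum (fun n => coeff n (1 + X * B)) (1 + b) := by
  refine (hasSum_nat_add_iff' 1).mp ?_
  simpa [coeff_one] using hB

theorem hasSum_coeff_mul {A B : ℝ⟦X⟧} {a b : ℝ} (hA0 : ∀ n, 0 ≤ coeff n A)
    (hB0 : ∀ n, 0 ≤ coeff n B) (hA : HasSum (fun n => coeff n A) a)
    (hB : HasSum (fun n => coeff n B) b) : HasSum (fun n => coeff n (A * B)) (a * b) := by
  have hnA : Summable fun n => ‖coeff n A‖ := by
    simpa only [Real.norm_of_nonneg (hA0 _)] using hA.summable
  have hnB : Summable fun n => ‖coeff n B‖ := by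
    simpa only [Real.norm_of_nonneg (hB0 _)] using hB.summable
  simp_rw [coeff_mul]
  rw [← hA.tsum_eq, ← hB.tsum_eq, tsum_mul_tsum_eq_tsum_sum_antidiagonal_of_summable_norm hnA hnB]
  exact (summable_norm_sum_mul_antidiagonal_of_summable_norm hnA hnB).of_norm.hasSum

theorem rescale_C {R : Type*} [CommSemiring R] (a r : R) : rescale a (C r) = C r := by
  ext n
  rw [coeff_rescale, coeff_C]
  split_ifs with h <;> simp [h]

theorem rescale_eq_one_add_X_mul {R : Type*} [CommRing R] {μ : R} {F : R⟦X⟧}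
    (hF : F = 1 + X * (F ^ 4 + C μ * F ^ 2)) (g : R) :
    rescale g F = 1 + X * (C g * (rescale g F ^ 4 + C μ * rescale g F ^ 2)) := by
  conv_lhs => rw [hF]
  simp only [map_add, map_one, map_mul, map_pow, rescale_X, rescale_C]
  ring

section QuarticEquation

variable {μ g : ℝ} {Y : ℝ⟦X⟧}

theorem sum_range_coeff_le_of_eq_one_add_X_mul (hμ : 0 ≤ μ) (hg : 0 ≤ g)
    (hY0 : ∀ n, 0 ≤ coeff n Y) (hY : Y = 1 + X * (C g * (Y ^ 4 + C μ * Y ^ 2))) {G : ℝ}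
    (hG : 1 + g * (G ^ 4 + μ * G ^ 2) ≤ G) (N : ℕ) : ∑ n ∈ range N, coeff n Y ≤ G := by
  have hY20 : ∀ n, 0 ≤ coeff n (Y ^ 2) := by
    simpa only [sq] using coeff_mul_nonneg hY0 hY0
  induction N with
  | zero =>
    have : 0 ≤ g * (G ^ 4 + μ * G ^ 2) := by positivity
    simp only [sum_range_zero]
    linarith
  | succ N ih =>
    set s := ∑ n ∈ range N, coeff n Y
    have hs : 0 ≤ s := sum_nonneg fun n _ => hY0 n
    have h2 : ∑ n ∈ range N, coeff n (Y ^ 2) ≤ s ^ 2 := by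
      simpa only [sq] using sum_range_coeff_mul_le hY0 hY0 N
    have h4 : ∑ n ∈ range N, coeff n (Y ^ 4) ≤ s ^ 4 :=
      calc ∑ n ∈ range N, coeff n (Y ^ 4)
          ≤ (∑ n ∈ range N, coeff n (Y ^ 2)) ^ 2 := by
            rw [show Y ^ 4 = Y ^ 2 * Y ^ 2 by ring, sq (∑ n ∈ range N, coeff n (Y ^ 2))]
            exact sum_range_coeff_mul_le hY20 hY20 N
        _ ≤ (s ^ 2) ^ 2 := by gcongr; exact sum_nonneg fun n _ => hY20 n
        _ = s ^ 4 := by ring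
    rw [hY, sum_range_succ_coeff_one_add_X_mul]
    simp only [coeff_C_mul, map_add, sum_add_distrib, ← mul_sum]
    calc 1 + g * (∑ n ∈ range N, coeff n (Y ^ 4) + μ * ∑ n ∈ range N, coeff n (Y ^ 2))
        ≤ 1 + g * (G ^ 4 + μ * G ^ 2) := by
          gcongr <;> linarith [pow_le_pow_left₀ hs ih 2, pow_le_pow_left₀ hs ih 4]
      _ ≤ G := hG

theorem eq_of_hasSum_coeff_of_eq_one_add_X_mul (hY0 : ∀ n, 0 ≤ coeff n Y)
    (hY : Y = 1 + X * (C g * (Y ^ 4 + C μ * Y ^ 2))) {S : ℝ}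
    (hS : HasSum (fun n => coeff n Y) S) : S = 1 + g * (S ^ 4 + μ * S ^ 2) := by
  have hY20 : ∀ n, 0 ≤ coeff n (Y ^ 2) := by
    simpa only [sq] using coeff_mul_nonneg hY0 hY0
  have h2 : HasSum (fun n => coeff n (Y ^ 2)) (S ^ 2) := by
    rw [sq, sq]
    exact hasSum_coeff_mul hY0 hY0 hS hS
  have h4 : HasSum (fun n => coeff n (Y ^ 4)) (S ^ 4) := by
    rw [show Y ^ 4 = Y ^ 2 * Y ^ 2 by ring, show S ^ 4 = S ^ 2 * S ^ 2 by ring]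
    exact hasSum_coeff_mul hY20 hY20 h2 h2
  have hB : HasSum (fun n => coeff n (C g * (Y ^ 4 + C μ * Y ^ 2)))
      (g * (S ^ 4 + μ * S ^ 2)) := by
    simpa only [coeff_C_mul, map_add] using (h4.add (h2.mul_left μ)).mul_left g
  rw [hY] at hS
  exact hS.unique (hasSum_coeff_one_add_X_mul hB)

theorem summable_coeff_iff_of_eq_one_add_X_mul (hμ : 0 ≤ μ) (hg : 0 ≤ g)
    (hY0 : ∀ n, 0 ≤ coeff n Y) (hY : Y = 1 + X * (C g * (Y ^ 4 + C μ * Y ^ 2))) {Gc : ℝ}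
    (hGc1 : 1 < Gc) (hGcRoot : -3 * Gc ^ 3 + 4 * Gc ^ 2 - μ * Gc + 2 * μ = 0) :
    Summable (fun n => coeff n Y) ↔ g ≤ (Gc - 1) / (Gc ^ 2 * (Gc ^ 2 + μ)) := by
  constructor
  · intro hsum
    set S := ∑' n, coeff n Y
    have hS : S = 1 + g * (S ^ 4 + μ * S ^ 2) :=
      eq_of_hasSum_coeff_of_eq_one_add_X_mul hY0 hY hsum.hasSum
    have hS1 : 1 ≤ S := by
      have : 0 ≤ g * (S ^ 4 + μ * S ^ 2) := by positivity
      linarith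
    have hgS : g = (S - 1) / (S ^ 2 * (S ^ 2 + μ)) := by
      rw [eq_div_iff (by positivity)]
      linear_combination -hS
    rw [hgS]
    exact sub_one_div_le_of_cubic_root hμ hGc1 hGcRoot (by positivity)
  · intro hle
    rw [le_div_iff₀ (by positivity)] at hle
    exact summable_of_sum_range_le hY0
      (sum_range_coeff_le_of_eq_one_add_X_mul hμ hg hY0 hY (G := Gc) (by linear_combination hle))

end QuarticEquation

end PowerSeries

theorem coeff_X_add_one_quartic_pow {R : Type*} [CommRing R] (μ : R) (n k : ℕ) :
    (((Polynomial.X + 1) ^ 4 + Polynomial.C μ * (Polynomial.X + 1) ^ 2) ^ n).coeff k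
      = ∑ q ∈ range (n + 1), μ ^ q * n.choose q * (4 * n - 2 * q).choose k := by
  rw [add_comm, add_pow, Polynomial.finsetSum_coeff]
  refine sum_congr rfl fun q hq => ?_
  have hq : q ≤ n := Nat.lt_succ_iff.mp (mem_range.mp hq)
  have e : (Polynomial.C μ * (Polynomial.X + 1) ^ 2) ^ q * ((Polynomial.X + 1) ^ 4) ^ (n - q)
      * (n.choose q : Polynomial R)
      = Polynomial.C (μ ^ q * n.choose q) * (Polynomial.X + 1) ^ (4 * n - 2 * q) := by
    rw [mul_pow, ← pow_mul, ← pow_mul, show 4 * n - 2 * q = 2 * q + 4 * (n - q) by omega,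
      pow_add, map_mul, map_pow, map_natCast]
    ring
  rw [e, Polynomial.coeff_C_mul, Polynomial.coeff_X_add_one_pow]

theorem succ_mul_alphaCoeff_succ (μ : ℝ) (n : ℕ) :
    (n + 1) * alphaCoeff μ (n + 1)
      = ∑ q ∈ range (n + 2), μ ^ q * (n + 1).choose q * (4 * (n + 1) - 2 * q).choose n := by
  rw [alphaCoeff, mul_sum]
  refine sum_congr rfl fun q hq => ?_
  have hq : q ≤ n + 1 := Nat.lt_succ_iff.mp (mem_range.mp hq)
  have hsub : ((4 * (n + 1) - 2 * q - n : ℕ) : ℝ) = 3 * ((n + 1 : ℕ) : ℝ) - 2 * q + 1 := by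
    rw [Nat.cast_sub (by omega), Nat.cast_sub (by omega)]
    push_cast
    ring
  have hpos : (0 : ℝ) < 3 * ((n + 1 : ℕ) : ℝ) - 2 * q + 1 := by
    rw [← hsub, Nat.cast_pos]
    omega
  have h : ((4 * (n + 1) - 2 * q).choose (n + 1) : ℝ) * (n + 1)
      = (4 * (n + 1) - 2 * q).choose n * (3 * ((n + 1 : ℕ) : ℝ) - 2 * q + 1) := by
    rw [← hsub]
    exact_mod_cast Nat.choose_succ_right_eq (4 * (n + 1) - 2 * q) n
  field_simp
  linear_combination (μ ^ q * (n + 1).choose q) * h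

theorem exists_eq_one_add_X_mul_and_coeff_eq_alphaCoeff {μ : ℝ} (hμ : 1 + μ ≠ 0) :
    ∃ F : ℝ⟦X⟧, F = 1 + X * (F ^ 4 + C μ * F ^ 2) ∧ ∀ n, coeff n F = alphaCoeff μ n := by
  obtain ⟨V, hV⟩ :=
    exists_eq_aeval_X_mul ((Polynomial.X + 1) ^ 4 + Polynomial.C μ * (Polynomial.X + 1) ^ 2)
  have hVF : V = (1 + X * V) ^ 4 + C μ * (1 + X * V) ^ 2 := by
    conv_lhs => rw [hV]
    simp [add_comm]
  have hV0 : constantCoeff V = 1 + μ := by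
    rw [hVF]
    simp
  refine ⟨1 + X * V, by rw [← hVF], fun n => ?_⟩
  rcases n with _ | n
  · simp [alphaCoeff]
  · rw [map_add, coeff_one, if_neg n.succ_ne_zero, zero_add, coeff_succ_X_mul]
    apply mul_left_cancel₀ (Nat.cast_add_one_ne_zero (R := ℝ) n)
    rw [succ_mul_coeff_eq_coeff_pow_of_eq_aeval hV (hV0 ▸ hμ), coeff_X_add_one_quartic_pow,
      succ_mul_alphaCoeff_succ]

theorem alphaCoeff_nonneg {μ : ℝ} (hμ : 0 ≤ μ) (n : ℕ) : 0 ≤ alphaCoeff μ n := by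
  refine sum_nonneg fun q hq => ?_
  have hq : (q : ℝ) ≤ n := by exact_mod_cast Nat.lt_succ_iff.mp (mem_range.mp hq)
  have : 0 < 3 * (n : ℝ) - 2 * q + 1 := by linarith [(Nat.cast_nonneg n : (0 : ℝ) ≤ n)]
  positivity

theorem summable_GLO_iff (μ : ℝ) (hμ : 0 ≤ μ) (Gc : ℝ) (hGc1 : 1 < Gc)
    (hGcRoot : -3 * Gc ^ 3 + 4 * Gc ^ 2 - μ * Gc + 2 * μ = 0)
    (gc : ℝ) (hgc : gc = (Gc - 1) / (Gc ^ 2 * (Gc ^ 2 + μ))) :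
    ∀ g : ℝ, 0 ≤ g →
      (Summable (fun n : ℕ => alphaCoeff μ n * g ^ n) ↔ g ≤ gc) := by
  intro g hg
  obtain ⟨F, hF, hFα⟩ :=
    exists_eq_one_add_X_mul_and_coeff_eq_alphaCoeff (by positivity : 1 + μ ≠ 0)
  have hcoeff : (fun n => coeff n (rescale g F)) = fun n => alphaCoeff μ n * g ^ n := by
    ext n
    rw [coeff_rescale, hFα, mul_comm]
  rw [← hcoeff, hgc]
  refine summable_coeff_iff_of_eq_one_add_X_mul hμ hg (fun n => ?_)
    (rescale_eq_one_add_X_mul hF g) hGc1 hGcRoot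
  rw [coeff_rescale, hFα]
  exact mul_nonneg (pow_nonneg hg n) (alphaCoeff_nonneg hμ n)
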